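/- arXiv:2312.09852 — 4 statements merged into one kernel-verified Lean document; each statement's English description precedes it below -/
import Mathlib

section
/- Let F : ℝ → ℝ^{m×m} and R : ℝ → ℝ^{m×n} be differentiable matrix-valued functions, let B : ℝ → ℝ^{m×m} be any matrix-valued function, and let Q be a fixed real m×n matrix. Assume that for every t: (i) R(t)ᵀR(t) = Iₙ, (ii) QᵀQ = Iₙ, (iii) QQᵀB(t) = B(t), (iv) F(t)B(t) = Iₘ, and (v) (QᵀB(t)R(t))(R(t)ᵀF(t)Q) = Iₙ. Then for every t the n×n matrix R(t)ᵀF(t)Q is invertible, and the function t ↦ log|det(R(t)ᵀF(t)Q)| is differentiable with derivative tr(R(t)ᵀ F′(t) B(t) R(t)), where F′(t) is the entrywise derivative of F. -/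
/-!
Since `(QᵀBR)(RᵀFQ) = 1`, the inverse of `M = RᵀFQ` is `QᵀBR`, so Jacobi's formula gives
`(log |det M|)' = tr (QᵀBR M')` with `M' = R'ᵀFQ + RᵀF'Q`. Moving `Q` around the trace and using
`QQᵀB = B` and `FB = 1`, the first summand becomes `tr (R'ᵀR)`, which vanishes because `RᵀR`
is constant, and the second becomes `tr (RᵀF'BR)`.
-/

open Matrix

theorem Matrix.trace_adjugate_mul_eq_sum_det_updateCol {k R : Type*} [Fintype k] [DecidableEq k]
    [CommRing R] (A B : Matrix k k R) :
    (A.adjugate * B).trace = ∑ i, (A.updateCol i fun r => B r i).det := by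
  simp_rw [← cramer_apply, cramer_eq_adjugate_mulVec]
  simp [trace, mul_apply, mulVec, dotProduct]

open Finset in
theorem Matrix.prod_updateCol_perm {k R : Type*} [Fintype k] [DecidableEq k] [CommMonoid R]
    (A : Matrix k k R) (i : k) (c : k → R) (σ : Equiv.Perm k) :
    ∏ j, A.updateCol i c (σ j) j = (∏ j ∈ univ.erase i, A (σ j) j) * c (σ i) := by
  rw [← prod_erase_mul univ _ (mem_univ i), updateCol_self]
  congr 1
  exact prod_congr rfl fun j hj => updateCol_ne (ne_of_mem_erase hj)

section Entrywise

variable {𝕜 : Type*} [NontriviallyNormedField 𝕜] {k l m : Type*}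

/-- Derivatives of matrix-valued functions are taken entrywise, so no matrix norm is involved. -/
def HasEntrywiseDerivAt (M : 𝕜 → Matrix m l 𝕜) (M' : Matrix m l 𝕜) (t : 𝕜) : Prop :=
  ∀ i j, HasDerivAt (fun s => M s i j) (M' i j) t

variable {M : 𝕜 → Matrix m l 𝕜} {M' : Matrix m l 𝕜} {t : 𝕜}

theorem HasEntrywiseDerivAt.transpose (h : HasEntrywiseDerivAt M M' t) :
    HasEntrywiseDerivAt (fun s => (M s)ᵀ) M'ᵀ t :=
  fun i j => h j i

theorem HasEntrywiseDerivAt.mul [Fintype l] {N : 𝕜 → Matrix l k 𝕜} {N' : Matrix l k 𝕜}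
    (hM : HasEntrywiseDerivAt M M' t) (hN : HasEntrywiseDerivAt N N' t) :
    HasEntrywiseDerivAt (fun s => M s * N s) (M' * N t + M t * N') t := by
  intro i j
  simp only [mul_apply, Matrix.add_apply, ← Finset.sum_add_distrib]
  exact HasDerivAt.fun_sum fun r _ => (hM i r).fun_mul (hN r j)

theorem HasEntrywiseDerivAt.mul_const [Fintype l] (hM : HasEntrywiseDerivAt M M' t)
    (N : Matrix l k 𝕜) : HasEntrywiseDerivAt (fun s => M s * N) (M' * N) t := by
  intro i j
  simp only [mul_apply]
  exact HasDerivAt.fun_sum fun r _ => (hM i r).mul_const (N r j)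

open Finset in
theorem HasEntrywiseDerivAt.det [Fintype k] [DecidableEq k] {M : 𝕜 → Matrix k k 𝕜}
    {M' : Matrix k k 𝕜} (h : HasEntrywiseDerivAt M M' t) :
    HasDerivAt (fun s => (M s).det) ((M t).adjugate * M').trace t := by
  have hLeibniz : HasDerivAt (fun s => (M s).det) (∑ σ : Equiv.Perm k,
      (Equiv.Perm.sign σ : 𝕜) * ∑ i, (∏ j ∈ univ.erase i, M t (σ j) j) * M' (σ i) i) t := by
    simp only [det_apply', ← smul_eq_mul (a := (∏ j ∈ univ.erase _, M t _ _))]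
    exact HasDerivAt.fun_sum fun σ _ =>
      (HasDerivAt.fun_finsetProd fun i _ => h (σ i) i).const_mul _
  convert hLeibniz using 1
  simp only [trace_adjugate_mul_eq_sum_det_updateCol, det_apply', prod_updateCol_perm,
    mul_sum]
  exact sum_comm

theorem HasEntrywiseDerivAt.trace_transpose_mul_eq_zero [CharZero 𝕜] [Fintype m] [Fintype l]
    [DecidableEq l] (h : HasEntrywiseDerivAt M M' t) (hM : ∀ᶠ s in nhds t, (M s)ᵀ * M s = 1) :
    (M'ᵀ * M t).trace = 0 := by
  have hsum : M'ᵀ * M t + (M t)ᵀ * M' = 0 := by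
    ext i j
    exact (h.transpose.mul h i j).unique <|
      (hasDerivAt_const t ((1 : Matrix l l 𝕜) i j)).congr_of_eventuallyEq
        (hM.mono fun s hs => by simp only [hs])
  have htwice : 2 * (M'ᵀ * M t).trace = 0 := by
    rw [two_mul]
    nth_rewrite 2 [← trace_transpose]
    rw [transpose_mul, transpose_transpose, ← trace_add, hsum, trace_zero]
  simpa using htwice

end Entrywise

theorem HasEntrywiseDerivAt.log_abs_det {k : Type*} [Fintype k] [DecidableEq k]
    {M : ℝ → Matrix k k ℝ} {M' : Matrix k k ℝ} {t : ℝ} (h : HasEntrywiseDerivAt M M' t)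
    (hdet : (M t).det ≠ 0) :
    HasDerivAt (fun s => Real.log |(M s).det|) ((M t)⁻¹ * M').trace t := by
  simp only [Real.log_abs]
  convert h.det.log hdet using 1
  rw [inv_def, Ring.inverse_eq_inv', smul_mul, trace_smul, smul_eq_mul, div_eq_inv_mul]

theorem manifold_logdet_deriv_general
    {m n : ℕ}
    (F F' : ℝ → Matrix (Fin m) (Fin m) ℝ)
    (B : ℝ → Matrix (Fin m) (Fin m) ℝ)
    (R R' : ℝ → Matrix (Fin m) (Fin n) ℝ)
    (Q : Matrix (Fin m) (Fin n) ℝ)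
    (hF : ∀ (i j : Fin m) (t : ℝ), HasDerivAt (fun s => F s i j) (F' t i j) t)
    (hR : ∀ (i : Fin m) (j : Fin n) (t : ℝ),
      HasDerivAt (fun s => R s i j) (R' t i j) t)
    (hRortho : ∀ t, (R t).transpose * R t = 1)
    (hQB : ∀ t, Q * Q.transpose * B t = B t)
    (hFB : ∀ t, F t * B t = 1)
    (hInv : ∀ t, (Q.transpose * B t * R t) * ((R t).transpose * F t * Q) = 1) :
    ∀ t : ℝ,
      IsUnit ((R t).transpose * F t * Q) ∧
      HasDerivAt (fun s => Real.log |((R s).transpose * F s * Q).det|)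
        ((R t).transpose * F' t * B t * R t).trace t := by
  intro t
  have hdet : IsUnit ((R t)ᵀ * F t * Q).det := isUnit_det_of_left_inverse (hInv t)
  refine ⟨(isUnit_iff_isUnit_det _).mpr hdet, ?_⟩
  have hRt : HasEntrywiseDerivAt R (R' t) t := fun i j => hR i j t
  have hM := (hRt.transpose.mul fun i j => hF i j t).mul_const Q
  convert hM.log_abs_det hdet.ne_zero using 1
  have hRR : ((R' t)ᵀ * R t).trace = 0 :=
    hRt.trace_transpose_mul_eq_zero (Filter.Eventually.of_forall hRortho)
  rw [inv_eq_left_inv (hInv t)]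
  calc ((R t)ᵀ * F' t * B t * R t).trace
      = ((R' t)ᵀ * R t).trace + ((R t)ᵀ * F' t * B t * R t).trace := by rw [hRR, zero_add]
    _ = (B t * R t * ((R' t)ᵀ * F t)).trace + (B t * R t * ((R t)ᵀ * F' t)).trace := by
        rw [trace_mul_comm (B t * R t), trace_mul_comm (B t * R t), Matrix.mul_assoc (R' t)ᵀ,
          ← Matrix.mul_assoc (F t), hFB, Matrix.one_mul]
        simp only [Matrix.mul_assoc]
    _ = (Q * Qᵀ * B t * R t * ((R' t)ᵀ * F t + (R t)ᵀ * F' t)).trace := by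
        rw [hQB, Matrix.mul_add, trace_add]
    _ = (Q * (Qᵀ * B t * R t * ((R' t)ᵀ * F t + (R t)ᵀ * F' t))).trace := by
        simp only [Matrix.mul_assoc]
    _ = (Qᵀ * B t * R t * (((R' t)ᵀ * F t + (R t)ᵀ * F' t) * Q)).trace := by
        rw [trace_mul_comm]
        simp only [Matrix.mul_assoc]

/-- Deterministic matrix form of the manifold volume-change gradient:
under the stated tangent-space conditions, `t ↦ log |det (R(t)ᵀ F(t) Q)|` is
differentiable with derivative `tr(R(t)ᵀ F′(t) B(t) R(t))`. -/
theorem manifold_logdet_deriv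
    {m n : ℕ}
    (F F' : ℝ → Matrix (Fin m) (Fin m) ℝ)
    (B : ℝ → Matrix (Fin m) (Fin m) ℝ)
    (R R' : ℝ → Matrix (Fin m) (Fin n) ℝ)
    (Q : Matrix (Fin m) (Fin n) ℝ)
    (hF : ∀ (i j : Fin m) (t : ℝ), HasDerivAt (fun s => F s i j) (F' t i j) t)
    (hR : ∀ (i : Fin m) (j : Fin n) (t : ℝ),
      HasDerivAt (fun s => R s i j) (R' t i j) t)
    (hRortho : ∀ t, (R t).transpose * R t = 1)
    (hQortho : Q.transpose * Q = 1)
    (hQB : ∀ t, Q * Q.transpose * B t = B t)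
    (hFB : ∀ t, F t * B t = 1)
    (hInv : ∀ t, (Q.transpose * B t * R t) * ((R t).transpose * F t * Q) = 1) :
    ∀ t : ℝ,
      IsUnit ((R t).transpose * F t * Q) ∧
      HasDerivAt (fun s => Real.log |((R s).transpose * F s * Q).det|)
        ((R t).transpose * F' t * B t * R t).trace t :=
  manifold_logdet_deriv_general F F' B R R' Q hF hR hRortho hQB hFB hInv
end

section
/- Let D, F, Fᵢ, G be real m×m matrices and Q, R real m×n matrices satisfying: QᵀQ = Iₙ, RᵀR = Iₙ, QQᵀG = G, QQᵀFᵢ = Fᵢ, and QᵀFᵢRRᵀFQ = Iₙ. Then |tr(Rᵀ D G R) − tr(Rᵀ D Fᵢ R)| ≤ ‖Rᵀ D Fᵢ R‖_F · ‖Rᵀ F G R − Iₙ‖_F. -/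
open Matrix

/-- The Frobenius norm of a matrix: the square root of the sum of the
squares of its entries. -/
noncomputable def frobNorm {k l : ℕ} (A : Matrix (Fin k) (Fin l) ℝ) : ℝ :=
  Real.sqrt (∑ i, ∑ j, (A i j) ^ 2)

/-! The hypotheses make `Fᵢ R Rᵀ F` act as the identity on the range of `Q`, which
contains that of `G`; hence `Rᵀ D G R = (Rᵀ D Fᵢ R)(Rᵀ F G R)`. The trace difference is then
`tr (Rᵀ D Fᵢ R (Rᵀ F G R - 1))`, which Cauchy–Schwarz for the Frobenius inner product bounds. -/

theorem frobNorm_transpose {k l : ℕ} (A : Matrix (Fin k) (Fin l) ℝ) :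
    frobNorm Aᵀ = frobNorm A := by
  rw [frobNorm, frobNorm, Finset.sum_comm]
  rfl

theorem abs_trace_mul_transpose_le_frobNorm_mul {k l : ℕ} (A B : Matrix (Fin k) (Fin l) ℝ) :
    |(A * Bᵀ).trace| ≤ frobNorm A * frobNorm B := by
  have htrace : (A * Bᵀ).trace = ∑ p : Fin k × Fin l, A p.1 p.2 * B p.1 p.2 := by
    rw [Fintype.sum_prod_type]
    rfl
  rw [htrace, frobNorm, frobNorm, ← Real.sqrt_mul (by positivity)]
  apply Real.abs_le_sqrt
  simpa only [Fintype.sum_prod_type] using Finset.sum_mul_sq_le_sq_mul_sq Finset.univ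
    (fun p : Fin k × Fin l => A p.1 p.2) (fun p => B p.1 p.2)

theorem abs_trace_mul_le_frobNorm_mul {k l : ℕ} (A : Matrix (Fin k) (Fin l) ℝ)
    (B : Matrix (Fin l) (Fin k) ℝ) :
    |(A * B).trace| ≤ frobNorm A * frobNorm B := by
  simpa only [transpose_transpose, frobNorm_transpose] using
    abs_trace_mul_transpose_le_frobNorm_mul A Bᵀ

theorem Matrix.mul_mul_eq_of_mul_mul_eq_one {m n p α : Type*} [Fintype m] [Fintype n]
    [DecidableEq n] [Semiring α] {Q : Matrix m n α} {P : Matrix n m α} {X Y : Matrix m m α}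
    {G : Matrix m p α} (hG : Q * P * G = G) (hX : Q * P * X = X)
    (hXY : P * X * Y * Q = 1) :
    X * Y * G = G :=
  calc X * Y * G = Q * (P * X * Y * Q) * (P * G) := by
        conv_lhs => rw [← hX, ← hG]
        simp only [Matrix.mul_assoc]
    _ = G := by rw [hXY, Matrix.mul_one, ← Matrix.mul_assoc, hG]

theorem gradient_estimator_error_bound_general
    {m n : ℕ}
    (D F Fi G : Matrix (Fin m) (Fin m) ℝ)
    (Q R : Matrix (Fin m) (Fin n) ℝ)
    (hG : Q * Q.transpose * G = G)
    (hFi : Q * Q.transpose * Fi = Fi)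
    (hInv : Q.transpose * Fi * R * R.transpose * F * Q = 1) :
    |(R.transpose * D * G * R).trace - (R.transpose * D * Fi * R).trace| ≤
      frobNorm (R.transpose * D * Fi * R) *
        frobNorm (R.transpose * F * G * R - 1) := by
  have hG_fixed : Fi * (R * Rᵀ * F) * G = G :=
    mul_mul_eq_of_mul_mul_eq_one hG hFi (by simpa only [Matrix.mul_assoc] using hInv)
  have hfactor : (Rᵀ * D * Fi * R) * (Rᵀ * F * G * R) = Rᵀ * D * G * R :=
    calc (Rᵀ * D * Fi * R) * (Rᵀ * F * G * R) = Rᵀ * D * (Fi * (R * Rᵀ * F) * G) * R := by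
          simp only [Matrix.mul_assoc]
      _ = Rᵀ * D * G * R := by rw [hG_fixed]
  calc |(Rᵀ * D * G * R).trace - (Rᵀ * D * Fi * R).trace|
      = |((Rᵀ * D * Fi * R) * (Rᵀ * F * G * R - 1)).trace| := by
        rw [Matrix.mul_sub, Matrix.mul_one, trace_sub, hfactor]
    _ ≤ frobNorm (Rᵀ * D * Fi * R) * frobNorm (Rᵀ * F * G * R - 1) :=
        abs_trace_mul_le_frobNorm_mul _ _

/-- Error bound (Theorem B.1): the difference between the trace with the
decoder Jacobian `G` and with the exact inverse Jacobian `Fᵢ` is bounded by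
the Frobenius-norm mismatch between encoder and decoder Jacobians. -/
theorem gradient_estimator_error_bound
    {m n : ℕ}
    (D F Fi G : Matrix (Fin m) (Fin m) ℝ)
    (Q R : Matrix (Fin m) (Fin n) ℝ)
    (hQ : Q.transpose * Q = 1)
    (hR : R.transpose * R = 1)
    (hG : Q * Q.transpose * G = G)
    (hFi : Q * Q.transpose * Fi = Fi)
    (hInv : Q.transpose * Fi * R * R.transpose * F * Q = 1) :
    |(R.transpose * D * G * R).trace - (R.transpose * D * Fi * R).trace| ≤
      frobNorm (R.transpose * D * Fi * R) *
        frobNorm (R.transpose * F * G * R - 1) :=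
  gradient_estimator_error_bound_general D F Fi G Q R hG hFi hInv
end

section
/- Let J and G be real m×m matrices and Q, R real m×n matrices such that RᵀR = Iₙ and R·Rᵀ·J·Q = J·Q. Then det(Qᵀ Jᵀ G J Q) = det(Rᵀ J Q)² · det(Rᵀ G R). -/
open Matrix

/-!
Since `R Rᵀ` fixes `J Q`, the columns of `J Q` lie in the column space of `R`, namely
`J Q = R A` with `A = Rᵀ J Q`. The pullback metric is then the congruence
`Qᵀ Jᵀ G J Q = Aᵀ (Rᵀ G R) A` by the square matrix `A`, whose determinant is
`det A ^ 2 * det (Rᵀ G R)`.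
-/

namespace Matrix

variable {l m n α : Type*} [Fintype m] [Fintype n] [CommRing α]

theorem det_transpose_mul_mul_self [DecidableEq n] (A B : Matrix n n α) :
    (Aᵀ * B * A).det = A.det ^ 2 * B.det := by
  rw [det_mul, det_mul, det_transpose]
  ring

theorem transpose_mul_mul_mul_of_eq_mul {R : Matrix m n α} {A : Matrix n l α}
    {M : Matrix m l α} (h : M = R * A) (G : Matrix m m α) :
    Mᵀ * G * M = Aᵀ * (Rᵀ * G * R) * A := by
  simp only [h, transpose_mul, Matrix.mul_assoc]

end Matrix

theorem pullback_metric_det_factorization_general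
    {m n : ℕ}
    (J G : Matrix (Fin m) (Fin m) ℝ)
    (Q R : Matrix (Fin m) (Fin n) ℝ)
    (hJQ : R * R.transpose * J * Q = J * Q) :
    (Q.transpose * J.transpose * G * J * Q).det =
      (R.transpose * J * Q).det ^ 2 * (R.transpose * G * R).det := by
  have hfactor : J * Q = R * (R.transpose * J * Q) := by
    rw [← hJQ]
    simp only [Matrix.mul_assoc]
  calc (Q.transpose * J.transpose * G * J * Q).det
      = ((J * Q).transpose * G * (J * Q)).det := by simp only [transpose_mul, Matrix.mul_assoc]
    _ = ((R.transpose * J * Q).transpose * (R.transpose * G * R) * (R.transpose * J * Q)).det := by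
      rw [transpose_mul_mul_mul_of_eq_mul hfactor]
    _ = (R.transpose * J * Q).det ^ 2 * (R.transpose * G * R).det :=
      det_transpose_mul_mul_self _ _

/-- Linear-algebraic core of the manifold change of variables (Theorem 4.1):
the pullback-metric determinant factors as
`det(Qᵀ Jᵀ G J Q) = det(Rᵀ J Q)² det(Rᵀ G R)`. -/
theorem pullback_metric_det_factorization
    {m n : ℕ}
    (J G : Matrix (Fin m) (Fin m) ℝ)
    (Q R : Matrix (Fin m) (Fin n) ℝ)
    (hR : R.transpose * R = 1)
    (hJQ : R * R.transpose * J * Q = J * Q) :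
    (Q.transpose * J.transpose * G * J * Q).det =
      (R.transpose * J * Q).det ^ 2 * (R.transpose * G * R).det :=
  pullback_metric_det_factorization_general J G Q R hJQ
end

section
/- Let n ≥ 1, let μ be the n-fold product of the standard Gaussian measure on ℝ, and define w : ℝⁿ → ℝⁿ by w(v) = √n · v/‖v‖ for v ≠ 0 and w(0) = 0. Then for all i, j: ∫ wᵢ dμ = 0 and ∫ wᵢ wⱼ dμ equals 1 if i = j and 0 otherwise. -/
/-!
The standard Gaussian measure on `ℝⁿ` is invariant under flipping the sign of one coordinate and
under permuting coordinates, and `w v` is `v` times a function of `‖v‖²`. Flipping coordinate `i`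
negates `wᵢ` and `wᵢ wⱼ` for `j ≠ i`, so they integrate to zero. Permuting coordinates makes all
the `∫ wᵢ²` equal, and they sum to `∫ ‖w‖² = n` since `v ≠ 0` almost surely.
-/

open MeasureTheory ProbabilityTheory

instance isNegInvariant_gaussianReal_zero (v : NNReal) : (gaussianReal 0 v).IsNegInvariant :=
  ⟨by rw [Measure.neg_def, gaussianReal_map_neg, neg_zero]⟩

theorem integral_eq_zero_of_comp_eq_neg {α : Type*} [MeasurableSpace α] {μ : Measure α}
    {T : α ≃ᵐ α} (hT : MeasurePreserving T μ μ) {g : α → ℝ} (hg : ∀ x, g (T x) = -g x) :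
    ∫ x, g x ∂μ = 0 := by
  rw [← self_eq_neg, ← integral_neg, ← hT.integral_comp' g]
  simp only [hg]

namespace MeasurableEquiv

variable {ι : Type*} [DecidableEq ι]

def negCoord (i : ι) : (ι → ℝ) ≃ᵐ (ι → ℝ) :=
  piCongrRight fun k => if k = i then MeasurableEquiv.neg ℝ else MeasurableEquiv.refl ℝ

@[simp]
theorem negCoord_apply (i : ι) (v : ι → ℝ) (k : ι) :
    negCoord i v k = if k = i then -v k else v k := by
  by_cases h : k = i <;> simp [negCoord, piCongrRight, h]

theorem arrowCongr'_refl_apply {α α' β : Type*} [MeasurableSpace β] (e : α ≃ α') (v : α → β)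
    (k : α') : arrowCongr' e (.refl β) v k = v (e.symm k) :=
  rfl

end MeasurableEquiv

open MeasurableEquiv

variable {ι : Type*} [Fintype ι]

theorem sum_sq_negCoord [DecidableEq ι] (i : ι) (v : ι → ℝ) :
    ∑ k, negCoord i v k ^ 2 = ∑ k, v k ^ 2 := by
  refine Finset.sum_congr rfl fun k _ => ?_
  by_cases hk : k = i <;> simp [hk]

theorem sq_le_sum_sq (v : ι → ℝ) (i : ι) : v i ^ 2 ≤ ∑ k, v k ^ 2 :=
  Finset.single_le_sum (fun k _ => sq_nonneg (v k)) (Finset.mem_univ i)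

variable (ν : Measure ℝ) [SigmaFinite ν]

theorem measurePreserving_negCoord [DecidableEq ι] [ν.IsNegInvariant] (i : ι) :
    MeasurePreserving (negCoord i) (Measure.pi fun _ : ι => ν) (Measure.pi fun _ : ι => ν) := by
  refine measurePreserving_pi _ _ fun k => ?_
  by_cases hk : k = i
  · simpa [hk] using Measure.measurePreserving_neg ν
  · simpa [hk] using MeasurePreserving.id ν

theorem measurePreserving_arrowCongr'_refl (e : Equiv.Perm ι) :
    MeasurePreserving (arrowCongr' e (.refl ℝ)) (Measure.pi fun _ : ι => ν)
      (Measure.pi fun _ : ι => ν) :=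
  measurePreserving_arrowCongr' _ _ e _ fun _ => .id ν

variable (φ : ℝ → ℝ)

theorem integral_radial_mul_coord [ν.IsNegInvariant] (i : ι) :
    ∫ v, φ (∑ k, v k ^ 2) * v i ∂(Measure.pi fun _ : ι => ν) = 0 := by
  classical
  refine integral_eq_zero_of_comp_eq_neg (measurePreserving_negCoord ν i) fun v => ?_
  rw [sum_sq_negCoord, negCoord_apply, if_pos rfl, mul_neg]

theorem integral_radial_mul_coord_mul_coord [ν.IsNegInvariant] {i j : ι} (hij : i ≠ j) :
    ∫ v, φ (∑ k, v k ^ 2) * (v i * v j) ∂(Measure.pi fun _ : ι => ν) = 0 := by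
  classical
  refine integral_eq_zero_of_comp_eq_neg (measurePreserving_negCoord ν i) fun v => ?_
  rw [sum_sq_negCoord, negCoord_apply, negCoord_apply, if_pos rfl, if_neg hij.symm]
  ring

theorem integral_radial_mul_sq_coord_eq (i j : ι) :
    ∫ v, φ (∑ k, v k ^ 2) * v i ^ 2 ∂(Measure.pi fun _ : ι => ν) =
      ∫ v, φ (∑ k, v k ^ 2) * v j ^ 2 ∂(Measure.pi fun _ : ι => ν) := by
  classical
  rw [← (measurePreserving_arrowCongr'_refl ν (Equiv.swap i j)).integral_comp']
  simp only [arrowCongr'_refl_apply, Equiv.symm_swap, Equiv.swap_apply_left,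
    Equiv.sum_comp (Equiv.swap i j) fun k => _ ^ 2]

theorem integral_sq_coord_div_sum_sq [IsProbabilityMeasure ν] [NullSingletonClass ν] (i : ι) :
    ∫ v, v i ^ 2 / ∑ k, v k ^ 2 ∂(Measure.pi fun _ : ι => ν) = (Fintype.card ι : ℝ)⁻¹ := by
  set μ := Measure.pi fun _ : ι => ν
  have hsymm (j : ι) : ∫ v, v j ^ 2 / ∑ k, v k ^ 2 ∂μ = ∫ v, v i ^ 2 / ∑ k, v k ^ 2 ∂μ := by
    simp_rw [div_eq_inv_mul]
    exact integral_radial_mul_sq_coord_eq ν _ j i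
  have hint (j : ι) : Integrable (fun v => v j ^ 2 / ∑ k, v k ^ 2) μ := by
    have hmeas : Measurable fun v : ι → ℝ => v j ^ 2 / ∑ k, v k ^ 2 := by fun_prop
    refine (integrable_const (1 : ℝ)).mono' hmeas.aestronglyMeasurable (ae_of_all _ fun v => ?_)
    rw [Real.norm_of_nonneg (by positivity)]
    exact div_le_one_of_le₀ (sq_le_sum_sq v j) (by positivity)
  have hsum_eq_one : ∀ᵐ v ∂μ, ∑ j, v j ^ 2 / ∑ k, v k ^ 2 = 1 := by
    filter_upwards [Measure.ae_eval_ne _ i 0] with v hv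
    rw [← Finset.sum_div, div_self]
    exact ((sq_pos_of_ne_zero hv).trans_le (sq_le_sum_sq v i)).ne'
  have hcard : (Fintype.card ι : ℝ) * ∫ v, v i ^ 2 / ∑ k, v k ^ 2 ∂μ = 1 := by
    calc (Fintype.card ι : ℝ) * ∫ v, v i ^ 2 / ∑ k, v k ^ 2 ∂μ
        = ∑ j, ∫ v, v j ^ 2 / ∑ k, v k ^ 2 ∂μ := by simp [hsymm]
      _ = ∫ v, ∑ j, v j ^ 2 / ∑ k, v k ^ 2 ∂μ := (integral_finsetSum _ fun j _ => hint j).symm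
      _ = 1 := by rw [integral_congr_ae hsum_eq_one, integral_const, probReal_univ, one_smul]
  exact eq_inv_of_mul_eq_one_right hcard

theorem rescaled_gaussian_moments_general
    {n : ℕ}
    (w : (Fin n → ℝ) → Fin n → ℝ)
    (hw : ∀ v : Fin n → ℝ, w v =
      if v = 0 then 0
      else fun i => Real.sqrt n * v i / Real.sqrt (∑ k, v k ^ 2)) :
    ∀ i j : Fin n,
      (∫ v, w v i ∂(Measure.pi fun _ : Fin n => gaussianReal 0 1)) = 0 ∧
      (∫ v, w v i * w v j ∂(Measure.pi fun _ : Fin n => gaussianReal 0 1)) =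
        if i = j then (1 : ℝ) else 0 := by
  intro i j
  have hw_apply (v : Fin n → ℝ) (k : Fin n) :
      w v k = Real.sqrt n / Real.sqrt (∑ l, v l ^ 2) * v k := by
    rw [hw]
    split_ifs with hv
    · simp [hv]
    · exact mul_div_right_comm _ _ _
  have hw_mul (v : Fin n → ℝ) (k l : Fin n) :
      w v k * w v l = n / (∑ m, v m ^ 2) * (v k * v l) := by
    have hsq : (Real.sqrt n / Real.sqrt (∑ m, v m ^ 2)) ^ 2 = n / ∑ m, v m ^ 2 := by
      rw [div_pow, Real.sq_sqrt (by positivity), Real.sq_sqrt (by positivity)]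
    rw [hw_apply, hw_apply]
    linear_combination (v k * v l) * hsq
  have := nullSingletonClass_gaussianReal (μ := 0) one_ne_zero
  refine ⟨?_, ?_⟩
  · simpa only [hw_apply] using
      integral_radial_mul_coord (gaussianReal 0 1) (fun s => Real.sqrt n / Real.sqrt s) i
  simp_rw [hw_mul]
  split_ifs with hij
  · subst hij
    have hdiag (v : Fin n → ℝ) :
        n / (∑ m, v m ^ 2) * (v i * v i) = n * (v i ^ 2 / ∑ m, v m ^ 2) := by
      ring
    simp_rw [hdiag, integral_const_mul, integral_sq_coord_div_sum_sq, Fintype.card_fin]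
    exact mul_inv_cancel₀ (Nat.cast_ne_zero.mpr i.pos.ne')
  · exact integral_radial_mul_coord_mul_coord _ _ hij

/-- Rescaling standard Gaussian noise to Euclidean length `√n` preserves
zero mean and unit second moment (Appendix A.4). -/
theorem rescaled_gaussian_moments
    {n : ℕ} (hn : 1 ≤ n)
    (w : (Fin n → ℝ) → Fin n → ℝ)
    (hw : ∀ v : Fin n → ℝ, w v =
      if v = 0 then 0
      else fun i => Real.sqrt n * v i / Real.sqrt (∑ k, v k ^ 2)) :
    ∀ i j : Fin n,
      (∫ v, w v i ∂(Measure.pi fun _ : Fin n => gaussianReal 0 1)) = 0 ∧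
      (∫ v, w v i * w v j ∂(Measure.pi fun _ : Fin n => gaussianReal 0 1)) =
        if i = j then (1 : ℝ) else 0 :=
  rescaled_gaussian_moments_general w hw
end
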